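/- There exist constants C > 0 and δ > 0 such that for all α > 0 and Δ > 0 with αΔ < δ, the aliased Matérn spectral density with ν = 3/2, d = 1 evaluated at frequency 0 satisfies | M_Δ(0; 3/2, 1)/(4/α) − 1 − α⁴Δ⁴/720 + α⁶Δ⁶/15120 | ≤ C α⁸Δ⁸. In particular M_Δ(0; 3/2, 1)/(4/α) = 1 + O(α⁴Δ⁴) as αΔ → 0. -/

import Mathlib

/-!
With `t = αΔ/(2π)` the normalized aliased density is `∑ₖ t⁴/(t² + k²)²`, the term `k = 0`
being `1`. Setting `u = t²/k²`, each other term is `u² - 2u³ + u⁴(3 + 2u)/(1 + u)²`, with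
remainder between `0` and `3u⁴`. Summing over `k ≠ 0` with `ζ(4) = π⁴/90` and `ζ(6) = π⁶/945`
gives the coefficients `2ζ(4)/(2π)⁴ = 1/720` and `4ζ(6)/(2π)⁶ = 1/15120`, and a remainder of
order `t⁸` for every value of `αΔ`.
-/

open Real

theorem bernoulli'_six : bernoulli' 6 = 1 / 42 := by
  have h5 : bernoulli' 5 = 0 := bernoulli'_eq_zero_of_odd (by decide) (by norm_num)
  rw [bernoulli'_def]
  norm_num [Finset.sum_range_succ, Nat.choose, h5]

theorem hasSum_zeta_six : HasSum (fun n : ℕ => (1 : ℝ) / (n : ℝ) ^ 6) (π ^ 6 / 945) := by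
  convert hasSum_zeta_nat (k := 3) three_ne_zero using 1
  rw [bernoulli_eq_bernoulli'_of_ne_one (by decide), bernoulli'_six]
  norm_num [Nat.factorial]
  ring

theorem hasSum_one_div_nat_add_one_pow {p : ℕ} {a : ℝ} (hp : p ≠ 0)
    (h : HasSum (fun n : ℕ => 1 / (n : ℝ) ^ p) a) :
    HasSum (fun n : ℕ => 1 / ((n : ℝ) + 1) ^ p) a := by
  simpa [zero_pow hp] using (hasSum_nat_add_iff' 1).mpr h

noncomputable def maternTerm (t m : ℝ) : ℝ := t ^ 4 / (t ^ 2 + m ^ 2) ^ 2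

theorem maternTerm_zero_right {t : ℝ} (ht : t ≠ 0) : maternTerm t 0 = 1 := by
  rw [maternTerm, zero_pow two_ne_zero, add_zero, ← pow_mul]
  exact div_self (pow_ne_zero _ ht)

theorem maternTerm_neg_right (t m : ℝ) : maternTerm t (-m) = maternTerm t m := by
  simp only [maternTerm, even_two.neg_pow]

theorem abs_maternTerm_sub_le (t : ℝ) {m : ℝ} (hm : m ≠ 0) :
    |maternTerm t m - (t ^ 4 / m ^ 4 - 2 * t ^ 6 / m ^ 6)| ≤ 3 * t ^ 8 / m ^ 8 := by
  have hremainder : maternTerm t m - (t ^ 4 / m ^ 4 - 2 * t ^ 6 / m ^ 6)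
      = t ^ 8 * (3 * m ^ 2 + 2 * t ^ 2) / (m ^ 6 * (t ^ 2 + m ^ 2) ^ 2) := by
    unfold maternTerm
    field_simp
    ring
  rw [hremainder, abs_of_nonneg (by positivity), div_le_div_iff₀ (by positivity) (by positivity)]
  have hgap : 3 * (t ^ 2 + m ^ 2) ^ 2 - (3 * m ^ 2 + 2 * t ^ 2) * m ^ 2
      = 3 * t ^ 4 + 4 * t ^ 2 * m ^ 2 := by ring
  have hle : (3 * m ^ 2 + 2 * t ^ 2) * m ^ 2 ≤ 3 * (t ^ 2 + m ^ 2) ^ 2 :=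
    sub_nonneg.mp (hgap ▸ by positivity)
  calc t ^ 8 * (3 * m ^ 2 + 2 * t ^ 2) * m ^ 8
      = t ^ 8 * m ^ 6 * ((3 * m ^ 2 + 2 * t ^ 2) * m ^ 2) := by ring
    _ ≤ t ^ 8 * m ^ 6 * (3 * (t ^ 2 + m ^ 2) ^ 2) := by gcongr
    _ = 3 * t ^ 8 * (m ^ 6 * (t ^ 2 + m ^ 2) ^ 2) := by ring

theorem exists_hasSum_maternTerm_nat_add_one (t : ℝ) :
    ∃ R, |R| ≤ 3 * t ^ 8 * (π ^ 4 / 90) ∧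
      HasSum (fun n : ℕ => maternTerm t (n + 1))
        (t ^ 4 * (π ^ 4 / 90) - 2 * t ^ 6 * (π ^ 6 / 945) + R) := by
  have hζ4 := hasSum_one_div_nat_add_one_pow four_ne_zero hasSum_zeta_four
  have hζ6 := hasSum_one_div_nat_add_one_pow (by norm_num) hasSum_zeta_six
  set taylor : ℕ → ℝ := fun n => t ^ 4 / ((n : ℝ) + 1) ^ 4 - 2 * t ^ 6 / ((n : ℝ) + 1) ^ 6
  have htaylor : HasSum taylor (t ^ 4 * (π ^ 4 / 90) - 2 * t ^ 6 * (π ^ 6 / 945)) := by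
    simpa only [mul_one_div] using (hζ4.mul_left (t ^ 4)).sub (hζ6.mul_left (2 * t ^ 6))
  have hbound : ∀ n : ℕ,
      ‖maternTerm t (n + 1) - taylor n‖ ≤ 3 * t ^ 8 * (1 / ((n : ℝ) + 1) ^ 4) := by
    intro n
    have hn : (1 : ℝ) ≤ n + 1 := by simp
    calc ‖maternTerm t (n + 1) - taylor n‖ ≤ 3 * t ^ 8 / ((n : ℝ) + 1) ^ 8 :=
          abs_maternTerm_sub_le t (by positivity)
      _ ≤ 3 * t ^ 8 / ((n : ℝ) + 1) ^ 4 := by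
          gcongr
          norm_num
      _ = 3 * t ^ 8 * (1 / ((n : ℝ) + 1) ^ 4) := (mul_one_div _ _).symm
  refine ⟨_, tsum_of_norm_bounded (hζ4.mul_left _) hbound, ?_⟩
  convert htaylor.add (Summable.of_norm_bounded (hζ4.summable.mul_left _) hbound).hasSum using 1
  funext n
  exact (add_sub_cancel _ _).symm

theorem abs_tsum_maternTerm_sub_le {t : ℝ} (ht : t ≠ 0) :
    |∑' k : ℤ, maternTerm t k - 1 - 2 * (π ^ 4 / 90) * t ^ 4 + 4 * (π ^ 6 / 945) * t ^ 6|
      ≤ π ^ 4 / 15 * t ^ 8 := by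
  obtain ⟨R, hR, hpos⟩ := exists_hasSum_maternTerm_nat_add_one t
  set S := t ^ 4 * (π ^ 4 / 90) - 2 * t ^ 6 * (π ^ 6 / 945) + R
  have hpos' : HasSum (fun n : ℕ => maternTerm t ((n + 1 : ℤ) : ℝ)) S := by
    simpa only [Int.cast_add, Int.cast_natCast, Int.cast_one] using hpos
  have hneg : HasSum (fun n : ℕ => maternTerm t ((-(n + 1) : ℤ) : ℝ)) S := by
    simpa only [Int.cast_neg, maternTerm_neg_right] using hpos'
  have hsum := HasSum.of_add_one_of_neg_add_one (f := fun k : ℤ => maternTerm t k) hpos' hneg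
  rw [hsum.tsum_eq, Int.cast_zero, maternTerm_zero_right ht]
  calc _ = |2 * R| := by congr 1; ring
    _ ≤ π ^ 4 / 15 * t ^ 8 := by rw [abs_mul, abs_two]; linarith

theorem maternSummand_div_eq_maternTerm {α Δ : ℝ} (hα : α ≠ 0) (hΔ : Δ ≠ 0) (k : ℝ) :
    4 * α ^ 3 / (α ^ 2 + 4 * π ^ 2 * ((0 : ℝ) + k / Δ) ^ 2) ^ 2 / (4 / α)
      = maternTerm (α * Δ / (2 * π)) k := by
  unfold maternTerm
  field_simp
  ring

theorem matern_threehalves_d1_freq_zero_expansion :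
    ∃ C > (0 : ℝ), ∃ δ > (0 : ℝ), ∀ α Δ : ℝ, 0 < α → 0 < Δ → α * Δ < δ →
      |(∑' k : ℤ, 4 * α ^ 3 / (α ^ 2 + 4 * π ^ 2 * ((0 : ℝ) + (k : ℝ) / Δ) ^ 2) ^ 2) / (4 / α)
          - 1 - α ^ 4 * Δ ^ 4 / 720 + α ^ 6 * Δ ^ 6 / 15120|
        ≤ C * α ^ 8 * Δ ^ 8 := by
  refine ⟨1, one_pos, 1, one_pos, fun α Δ hα hΔ _ => ?_⟩
  set t := α * Δ / (2 * π) with ht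
  have h4 : α ^ 4 * Δ ^ 4 / 720 = 2 * (π ^ 4 / 90) * t ^ 4 := by
    rw [ht]; field_simp; ring
  have h6 : α ^ 6 * Δ ^ 6 / 15120 = 4 * (π ^ 6 / 945) * t ^ 6 := by
    rw [ht]; field_simp; ring
  have h8 : π ^ 4 / 15 * t ^ 8 ≤ 1 * α ^ 8 * Δ ^ 8 := by
    have hπ4 : 1 ≤ 3840 * π ^ 4 := by
      have := one_le_pow₀ (n := 4) (one_le_two.trans two_le_pi); linarith
    calc π ^ 4 / 15 * t ^ 8 = α ^ 8 * Δ ^ 8 / (3840 * π ^ 4) := by rw [ht]; field_simp; ring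
      _ ≤ 1 * α ^ 8 * Δ ^ 8 := by rw [one_mul]; exact div_le_self (by positivity) hπ4
  rw [← tsum_div_const, tsum_congr fun k : ℤ => maternSummand_div_eq_maternTerm hα.ne' hΔ.ne' k,
    h4, h6]
  exact (abs_tsum_maternTerm_sub_le (by positivity)).trans h8
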